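/- Suppose u₁ < u₂ < ⋯ < u_k are points on 𝕃_0 and v₁, v₂, …, v_k are distinct points on 𝕃_n such that for each pair i ≠ j, the geodesics Γ_{u_i, v_i} and Γ_{u_j, v_j} do not coincide between the lines 𝕃_{n/3} and 𝕃_{2n/3}. Then there exists a subset I ⊂ {1, …, k} with |I| ≥ k^{1/8} such that the restrictions of the geodesics {Γ_{u_i, v_i}}_{i ∈ I} are pairwise disjoint either between the lines 𝕃_0 and 𝕃_{n/6}, or between 𝕃_{n/6} and 𝕃_{n/3}, or between 𝕃_{n/3} and 𝕃_{2n/3}, or between 𝕃_{2n/3} and 𝕃_n. -/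

import Mathlib

/-!
Read each geodesic level by level: its vertex on `x + y = t` is determined by its `x`-coordinate
`x_i(t)`, which moves by `0` or `1` from one level to the next. By uniqueness, two geodesics that
meet both below `𝕃_{n/3}` and above `𝕃_{2n/3}` coincide in between, so every pair is disjoint
either in the lower or in the upper third. Two such sequences cannot change order without
meeting, so disjointness in the lower third is transitive (the starting points are ordered), and
so is disjointness in the upper third once, by Erdős–Szekeres, we pass to `√k` geodesics with
monotone endpoints. A second Erdős–Szekeres step for two transitive relations covering all pairs
leaves `k^{1/4} ≥ k^{1/8}` geodesics that are pairwise disjoint in one of the two thirds.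
-/

open MeasureTheory ProbabilityTheory Filter Set
open scoped ENNReal

namespace LPP

/-- A single up or right step on `ℤ²`. -/
def UpStep (u v : ℤ × ℤ) : Prop :=
  v = (u.1 + 1, u.2) ∨ v = (u.1, u.2 + 1)

/-- `p` is a finite up/right oriented path from `u` to `v`. -/
def IsPathFrom (p : List (ℤ × ℤ)) (u v : ℤ × ℤ) : Prop :=
  p.Chain' UpStep ∧ p.head? = some u ∧ p.getLast? = some v

/-- The passage time of a path: the total weight of its vertices, the last one excluded. -/
def pathWeight (ω : ℤ × ℤ → ℝ) (p : List (ℤ × ℤ)) : ℝ :=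
  (p.dropLast.map ω).sum

/-- The last passage time `T_{u,v}`. -/
noncomputable def lpTime (ω : ℤ × ℤ → ℝ) (u v : ℤ × ℤ) : ℝ :=
  sSup (pathWeight ω '' {p | IsPathFrom p u v})

/-- `p` is a geodesic from `u` to `v`. -/
def IsGeodesic (ω : ℤ × ℤ → ℝ) (u v : ℤ × ℤ) (p : List (ℤ × ℤ)) : Prop :=
  IsPathFrom p u v ∧ pathWeight ω p = lpTime ω u v

/-- The Exp(1) distribution on `ℝ`. -/
noncomputable def expMeasure : Measure ℝ :=
  (volume : Measure ℝ).withDensity (exponentialPDF 1)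

/-- The environment `ξ` is i.i.d. with Exp(1) marginals under `μ`. -/
def IsExpEnv {Ω : Type*} [MeasurableSpace Ω] (μ : Measure Ω) (ξ : ℤ × ℤ → Ω → ℝ) : Prop :=
  (∀ v, Measurable (ξ v)) ∧
    iIndepFun ξ μ ∧
    ∀ v, μ.map (ξ v) = expMeasure

/-- The weight configuration seen from a sample point. -/
def cfg {Ω : Type*} (ξ : ℤ × ℤ → Ω → ℝ) (ω : Ω) : ℤ × ℤ → ℝ := fun v => ξ v ω

/-- The lattice segment on the line `x + y = 0` with midpoint `(0,0)` and radius `r`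
(in the antidiagonal coordinate). -/
def segA (r : ℝ) : Set (ℤ × ℤ) :=
  {v | v.1 + v.2 = 0 ∧ |(v.1 : ℝ)| ≤ r}

/-- The lattice segment on the line `x + y = 2n` with midpoint `(n,n)` and radius `r`. -/
def segB (n : ℕ) (r : ℝ) : Set (ℤ × ℤ) :=
  {v | v.1 + v.2 = 2 * (n : ℤ) ∧ |(v.1 : ℝ) - (n : ℝ)| ≤ r}

/-- `A_n`: the segment of length `2n^{2/3}` on `𝕃_0` with midpoint `𝟎`. -/
def An (n : ℕ) : Set (ℤ × ℤ) := segA ((n : ℝ) ^ ((2 : ℝ) / 3))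

/-- `B_n`: the segment of length `2n^{2/3}` on `𝕃_n` with midpoint `(n,n)`. -/
def Bn (n : ℕ) : Set (ℤ × ℤ) := segB n ((n : ℝ) ^ ((2 : ℝ) / 3))

/-- The order along an antidiagonal line: `u < v` iff `v = u + i • (-1,1)` for some `i ≥ 1`. -/
def adLt (u v : ℤ × ℤ) : Prop :=
  ∃ i : ℕ, 0 < i ∧ v = (u.1 - (i : ℤ), u.2 + (i : ℤ))

/-- The portion of (the vertex set of) a path lying in the strip `a ≤ x + y ≤ b`. -/
def stripSet (p : List (ℤ × ℤ)) (a b : ℝ) : Set (ℤ × ℤ) :=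
  {w | w ∈ p ∧ a ≤ (w.1 : ℝ) + (w.2 : ℝ) ∧ (w.1 : ℝ) + (w.2 : ℝ) ≤ b}

/-- The `x`-coordinate of an up/right path as a function of the level, up to level `N`. -/
def StepsZeroOrOne (N : ℕ) (f : ℕ → ℤ) : Prop :=
  ∀ t < N, f (t + 1) = f t ∨ f (t + 1) = f t + 1

namespace StepsZeroOrOne

variable {N : ℕ} {f g : ℕ → ℤ}

theorem exists_eq_of_lt_of_le (hf : StepsZeroOrOne N f) (hg : StepsZeroOrOne N g) {a b : ℕ}
    (hab : a ≤ b) (hbN : b ≤ N) (ha : f a < g a) (hb : g b ≤ f b) :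
    ∃ c, a ≤ c ∧ c ≤ b ∧ f c = g c := by
  induction b, hab using Nat.le_induction with
  | base => omega
  | succ b hab ih =>
    by_cases hb' : g b ≤ f b
    · obtain ⟨c, hac, hcb, hc⟩ := ih (by omega) hb'
      exact ⟨c, hac, by omega, hc⟩
    · refine ⟨b + 1, by omega, le_rfl, ?_⟩
      rcases hf b (by omega) with h | h <;> rcases hg b (by omega) with h' | h' <;> omega

theorem lt_iff_lt (hf : StepsZeroOrOne N f) (hg : StepsZeroOrOne N g) {a b : ℕ} (hbN : b ≤ N)
    (hne : ∀ t ∈ Set.Icc a b, f t ≠ g t) {s t : ℕ} (hs : s ∈ Set.Icc a b) (ht : t ∈ Set.Icc a b) :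
    f s < g s ↔ f t < g t := by
  wlog hst : s ≤ t generalizing s t
  · exact (this ht hs (by omega)).symm
  have hne' : ∀ c, s ≤ c → c ≤ t → f c ≠ g c := fun c hsc hct =>
    hne c ⟨hs.1.trans hsc, hct.trans ht.2⟩
  constructor
  · intro hlt
    by_contra hge
    obtain ⟨c, hsc, hct, hc⟩ :=
      hf.exists_eq_of_lt_of_le hg hst (ht.2.trans hbN) hlt (not_lt.1 hge)
    exact hne' c hsc hct hc
  · intro hlt
    by_contra hge
    have hgt : g s < f s := lt_of_le_of_ne (not_lt.1 hge) (hne' s le_rfl hst).symm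
    obtain ⟨c, hsc, hct, hc⟩ := hg.exists_eq_of_lt_of_le hf hst (ht.2.trans hbN) hgt hlt.le
    exact hne' c hsc hct hc.symm

theorem ne_of_between {h : ℕ → ℤ} (hf : StepsZeroOrOne N f)
    (hg : StepsZeroOrOne N g) (hh : StepsZeroOrOne N h) {a b : ℕ} (hbN : b ≤ N)
    (hfg : ∀ t ∈ Set.Icc a b, f t ≠ g t) (hgh : ∀ t ∈ Set.Icc a b, g t ≠ h t) {s t : ℕ}
    (hs : s ∈ Set.Icc a b) (ht : t ∈ Set.Icc a b)
    (hbetween : f s < g s ∧ g s < h s ∨ h s < g s ∧ g s < f s) : f t ≠ h t := by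
  have hgf : ∀ t ∈ Set.Icc a b, g t ≠ f t := fun t ht => (hfg t ht).symm
  have hhg : ∀ t ∈ Set.Icc a b, h t ≠ g t := fun t ht => (hgh t ht).symm
  rcases hbetween with ⟨h₁, h₂⟩ | ⟨h₁, h₂⟩
  · exact ((hf.lt_iff_lt hg hbN hfg hs ht).1 h₁).trans ((hg.lt_iff_lt hh hbN hgh hs ht).1 h₂) |>.ne
  · exact (((hh.lt_iff_lt hg hbN hhg hs ht).1 h₁).trans
      ((hg.lt_iff_lt hf hbN hgf hs ht).1 h₂)).ne'

end StepsZeroOrOne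

section OrderedChains

variable {ι : Type*} [LinearOrder ι]

def OrderedPairwise (r : ι → ι → Prop) (s : Finset ι) : Prop :=
  ∀ i ∈ s, ∀ j ∈ s, i < j → r i j

def OrderedTransOn (r : ι → ι → Prop) (s : Finset ι) : Prop :=
  ∀ i ∈ s, ∀ j ∈ s, ∀ l ∈ s, i < j → j < l → r i j → r j l → r i l

open Classical in
noncomputable def chainHeight (r : ι → ι → Prop) (A : Finset ι) (i : ι) : ℕ :=
  (A.powerset.filter fun B => i ∈ B ∧ (∀ j ∈ B, j ≤ i) ∧ OrderedPairwise r B).sup Finset.card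

variable {r : ι → ι → Prop} {A B : Finset ι} {i j : ι}

theorem card_le_chainHeight (hBA : B ⊆ A) (hiB : i ∈ B) (hBi : ∀ j ∈ B, j ≤ i)
    (hB : OrderedPairwise r B) : B.card ≤ chainHeight r A i := by
  classical
  exact Finset.le_sup (f := Finset.card)
    (Finset.mem_filter.2 ⟨Finset.mem_powerset.2 hBA, hiB, hBi, hB⟩)

theorem exists_card_eq_chainHeight (hi : i ∈ A) :
    ∃ B ⊆ A, i ∈ B ∧ (∀ j ∈ B, j ≤ i) ∧ OrderedPairwise r B ∧ B.card = chainHeight r A i := by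
  classical
  obtain ⟨B, hB, hBcard⟩ := Finset.exists_mem_eq_sup
    (A.powerset.filter fun B => i ∈ B ∧ (∀ j ∈ B, j ≤ i) ∧ OrderedPairwise r B)
    ⟨{i}, Finset.mem_filter.2 ⟨by simpa using hi, by simp, by simp, by simp [OrderedPairwise]⟩⟩
    Finset.card
  obtain ⟨hBA, hiB, hBi, hB⟩ := Finset.mem_filter.1 hB
  exact ⟨B, Finset.mem_powerset.1 hBA, hiB, hBi, hB, by rw [chainHeight, hBcard]⟩

theorem one_le_chainHeight (hi : i ∈ A) : 1 ≤ chainHeight r A i :=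
  card_le_chainHeight (B := {i}) (by simpa using hi) (Finset.mem_singleton_self i)
    (by simp) (by simp [OrderedPairwise])

theorem chainHeight_lt_chainHeight (hr : OrderedTransOn r A) (hi : i ∈ A) (hj : j ∈ A)
    (hij : i < j) (h : r i j) : chainHeight r A i < chainHeight r A j := by
  classical
  obtain ⟨B, hBA, hiB, hBi, hB, hBcard⟩ := exists_card_eq_chainHeight (r := r) hi
  have hjB : j ∉ B := fun hjB => (hBi j hjB).not_gt hij
  have hxj : ∀ x ∈ B, r x j := fun x hx => by
    rcases (hBi x hx).eq_or_lt with rfl | hxi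
    · exact h
    · exact hr x (hBA hx) i hi j hj hxi hij (hB x hx i hiB hxi) h
  have hchain : OrderedPairwise r (insert j B) := by
    intro x hx y hy hxy
    rcases Finset.mem_insert.1 hx, Finset.mem_insert.1 hy with ⟨hxj | hxB, hyj | hyB⟩
    · exact (hxy.ne (hxj.trans hyj.symm)).elim
    · exact ((hBi y hyB).trans hij.le |>.not_gt (hxj ▸ hxy)).elim
    · exact hyj ▸ hxj x hxB
    · exact hB x hxB y hyB hxy
  have := card_le_chainHeight (Finset.insert_subset hj hBA) (Finset.mem_insert_self j B)
    (fun x hx => (Finset.mem_insert.1 hx).elim le_of_eq fun hx => (hBi x hx).trans hij.le) hchain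
  rw [Finset.card_insert_of_notMem hjB] at this
  omega

/-- Seidenberg's argument for the Erdős–Szekeres theorem:
`i ↦ (chainHeight P A i, chainHeight Q A i)` is injective on `A`. -/
theorem exists_orderedPairwise_card_le_sq {P Q : ι → ι → Prop} (hP : OrderedTransOn P A)
    (hQ : OrderedTransOn Q A) (hPQ : OrderedPairwise (fun i j => P i j ∨ Q i j) A) :
    ∃ B ⊆ A, A.card ≤ B.card ^ 2 ∧ (OrderedPairwise P B ∨ OrderedPairwise Q B) := by
  classical
  rcases A.eq_empty_or_nonempty with rfl | hA
  · exact ⟨∅, subset_rfl, by simp, Or.inl (by simp [OrderedPairwise])⟩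
  set F := A.sup (chainHeight P A)
  set G := A.sup (chainHeight Q A)
  have hinj : Set.InjOn (fun i => (chainHeight P A i, chainHeight Q A i)) A := by
    intro i hi j hj hij
    by_contra hne
    wlog hlt : i < j generalizing i j
    · exact this hj hi hij.symm (Ne.symm hne) (lt_of_le_of_ne (not_lt.1 hlt) (Ne.symm hne))
    rcases hPQ i hi j hj hlt with h | h
    · exact (chainHeight_lt_chainHeight hP hi hj hlt h).ne (congrArg Prod.fst hij)
    · exact (chainHeight_lt_chainHeight hQ hi hj hlt h).ne (congrArg Prod.snd hij)
  have hcard : A.card ≤ F * G := by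
    calc A.card ≤ (Finset.Icc 1 F ×ˢ Finset.Icc 1 G).card := by
          refine Finset.card_le_card_of_injOn _ (fun i hi => ?_) hinj
          simp only [Finset.coe_product, Set.mem_prod, Finset.coe_Icc, Set.mem_Icc]
          exact ⟨⟨one_le_chainHeight hi, Finset.le_sup hi⟩, one_le_chainHeight hi, Finset.le_sup hi⟩
      _ = F * G := by simp
  obtain ⟨iP, hiP, hFP⟩ := Finset.exists_mem_eq_sup A hA (chainHeight P A)
  obtain ⟨iQ, hiQ, hGQ⟩ := Finset.exists_mem_eq_sup A hA (chainHeight Q A)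
  rcases le_total G F with hGF | hFG
  · obtain ⟨B, hBA, -, -, hB, hBcard⟩ := exists_card_eq_chainHeight (r := P) hiP
    refine ⟨B, hBA, ?_, Or.inl hB⟩
    rw [hBcard, ← hFP, sq]
    exact hcard.trans (Nat.mul_le_mul_left F hGF)
  · obtain ⟨B, hBA, -, -, hB, hBcard⟩ := exists_card_eq_chainHeight (r := Q) hiQ
    refine ⟨B, hBA, ?_, Or.inr hB⟩
    rw [hBcard, ← hGQ, sq]
    exact hcard.trans (Nat.mul_le_mul_right G hFG)

theorem OrderedPairwise.forall_ne (h : OrderedPairwise r A) (hr : ∀ i j, r i j → r j i) :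
    ∀ i ∈ A, ∀ j ∈ A, i ≠ j → r i j := by
  intro i hi j hj hij
  rcases hij.lt_or_gt with hlt | hlt
  · exact h i hi j hj hlt
  · exact hr j i (h j hj i hi hlt)

end OrderedChains

theorem exists_separated_subfamily {ι : Type*} [LinearOrder ι] [Fintype ι] {X : ι → ℕ → ℤ}
    {N a b : ℕ} (haN : a ≤ N) (hX : ∀ i, StepsZeroOrOne N (X i)) (h0 : StrictAnti fun i => X i 0)
    (hN : Function.Injective fun i => X i N)
    (hsplit : ∀ i j, i ≠ j →
      (∀ t ∈ Set.Icc 0 a, X i t ≠ X j t) ∨ ∀ t ∈ Set.Icc b N, X i t ≠ X j t) :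
    ∃ I : Finset ι, Fintype.card ι ≤ I.card ^ 4 ∧
      ((∀ i ∈ I, ∀ j ∈ I, i ≠ j → ∀ t ∈ Set.Icc 0 a, X i t ≠ X j t) ∨
        ∀ i ∈ I, ∀ j ∈ I, i ≠ j → ∀ t ∈ Set.Icc b N, X i t ≠ X j t) := by
  obtain ⟨S, -, hS, hSmono⟩ := exists_orderedPairwise_card_le_sq (A := Finset.univ)
    (P := fun i j => X i N < X j N) (Q := fun i j => X j N < X i N)
    (fun _ _ _ _ _ _ _ _ h₁ h₂ => h₁.trans h₂) (fun _ _ _ _ _ _ _ _ h₁ h₂ => h₂.trans h₁)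
    (fun i _ j _ hij => lt_or_gt_of_ne (hN.ne hij.ne))
  -- Lattice paths cannot cross without meeting, so separation is transitive along a chain whose
  -- order is visible at one end of the range.
  have hlo : OrderedTransOn (fun i j => ∀ t ∈ Set.Icc 0 a, X i t ≠ X j t) S :=
    fun i _ j _ l _ hij hjl h₁ h₂ t ht => (hX i).ne_of_between (hX j) (hX l) haN h₁ h₂
      ⟨le_rfl, Nat.zero_le a⟩ ht (Or.inr ⟨h0 hjl, h0 hij⟩)
  have hhi : OrderedTransOn (fun i j => ∀ t ∈ Set.Icc b N, X i t ≠ X j t) S := by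
    intro i hi j hj l hl hij hjl h₁ h₂ t ht
    refine (hX i).ne_of_between (hX j) (hX l) le_rfl h₁ h₂ ⟨ht.1.trans ht.2, le_rfl⟩ ht ?_
    rcases hSmono with h | h
    · exact Or.inl ⟨h i hi j hj hij, h j hj l hl hjl⟩
    · exact Or.inr ⟨h j hj l hl hjl, h i hi j hj hij⟩
  obtain ⟨I, -, hI, hIsep⟩ := exists_orderedPairwise_card_le_sq hlo hhi
    fun i _ j _ hij => hsplit i j hij.ne
  refine ⟨I, ?_, hIsep.imp (·.forall_ne fun i j h t ht => (h t ht).symm)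
    (·.forall_ne fun i j h t ht => (h t ht).symm)⟩
  calc Fintype.card ι = (Finset.univ : Finset ι).card := rfl
    _ ≤ S.card ^ 2 := hS
    _ ≤ (I.card ^ 2) ^ 2 := Nat.pow_le_pow_left hI 2
    _ = I.card ^ 4 := by ring

theorem UpStep.le {u v : ℤ × ℤ} (h : UpStep u v) : u ≤ v := by
  rcases h with rfl | rfl <;> simp [Prod.le_def]

namespace IsPathFrom

variable {p q : List (ℤ × ℤ)} {u v u' v' : ℤ × ℤ}

theorem ne_nil (hp : IsPathFrom p u v) : p ≠ [] := by
  rintro rfl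
  simp [IsPathFrom] at hp

theorem getD_zero (hp : IsPathFrom p u v) : p.getD 0 0 = u := by
  obtain ⟨-, h, -⟩ := hp
  cases p <;> simp_all

theorem getD_length_sub_one (hp : IsPathFrom p u v) : p.getD (p.length - 1) 0 = v := by
  rw [List.getD_eq_getElem?_getD, ← List.getLast?_eq_getElem?, hp.2.2]
  rfl

theorem upStep_getD (hp : IsPathFrom p u v) {t : ℕ} (ht : t + 1 < p.length) :
    UpStep (p.getD t 0) (p.getD (t + 1) 0) := by
  rw [List.getD_eq_getElem _ _ (by omega), List.getD_eq_getElem _ _ ht]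
  exact List.isChain_iff_getElem.1 hp.1 t ht

theorem getD_mono (hp : IsPathFrom p u v) {s t : ℕ} (hst : s ≤ t) (ht : t < p.length) :
    p.getD s 0 ≤ p.getD t 0 := by
  rcases hst.eq_or_lt with rfl | hst
  · rfl
  have hle : p.Pairwise (· ≤ ·) := List.isChain_iff_pairwise.1 (hp.1.imp fun _ _ => UpStep.le)
  rw [List.getD_eq_getElem _ _ (hst.trans ht), List.getD_eq_getElem _ _ ht]
  exact List.pairwise_iff_getElem.1 hle _ _ _ _ hst

theorem mem_Icc (hp : IsPathFrom p u v) {w : ℤ × ℤ} (hw : w ∈ p) : w ∈ Finset.Icc u v := by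
  obtain ⟨t, ht, rfl⟩ := List.mem_iff_getElem.1 hw
  rw [← List.getD_eq_getElem _ 0 ht, Finset.mem_Icc, ← hp.getD_zero, ← hp.getD_length_sub_one]
  exact ⟨hp.getD_mono (Nat.zero_le _) ht, hp.getD_mono (by omega) (by omega)⟩

theorem level_getD (hp : IsPathFrom p u v) :
    ∀ t < p.length, (p.getD t 0).1 + (p.getD t 0).2 = u.1 + u.2 + t
  | 0, _ => by rw [hp.getD_zero]; simp
  | t + 1, ht => by
    have ih := hp.level_getD t (by omega)
    rcases hp.upStep_getD ht with h | h <;> simp only [h] <;> push_cast <;> omega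

theorem length_eq (hp : IsPathFrom p u v) : (p.length : ℤ) = v.1 + v.2 - (u.1 + u.2) + 1 := by
  have hpos := List.length_pos_iff.2 hp.ne_nil
  have h := hp.level_getD (p.length - 1) (by omega)
  rw [hp.getD_length_sub_one] at h
  omega

theorem pathWeight_add (hp : IsPathFrom p u v) (ω : ℤ × ℤ → ℝ) :
    pathWeight ω p + ω v = (p.map ω).sum := by
  conv_rhs => rw [← List.dropLast_append_getLast? v hp.2.2]
  simp [pathWeight]

theorem pathWeight_le (hp : IsPathFrom p u v) (ω : ℤ × ℤ → ℝ) :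
    pathWeight ω p ≤ p.length • ∑ w ∈ Finset.Icc u v, |ω w| := by
  have hM : ∀ w ∈ p, ω w ≤ ∑ w ∈ Finset.Icc u v, |ω w| := fun w hw =>
    (le_abs_self _).trans (Finset.single_le_sum (fun w _ => abs_nonneg (ω w)) (hp.mem_Icc hw))
  calc pathWeight ω p ≤ (p.dropLast.map ω).length • ∑ w ∈ Finset.Icc u v, |ω w| := by
        refine List.sum_le_card_nsmul _ _ ?_
        simp only [List.mem_map]
        rintro _ ⟨w, hw, rfl⟩
        exact hM w (List.dropLast_subset _ hw)
    _ ≤ p.length • ∑ w ∈ Finset.Icc u v, |ω w| := by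
        simp only [List.length_map, List.length_dropLast]
        exact nsmul_le_nsmul_left (Finset.sum_nonneg fun w _ => abs_nonneg _) (by omega)

theorem pathWeight_le_lpTime (hp : IsPathFrom p u v) (ω : ℤ × ℤ → ℝ) :
    pathWeight ω p ≤ lpTime ω u v := by
  refine le_csSup ⟨(v.1 + v.2 - (u.1 + u.2) + 1).toNat • ∑ w ∈ Finset.Icc u v, |ω w|, ?_⟩
    ⟨p, hp, rfl⟩
  rintro _ ⟨q, hq, rfl⟩
  have hlen : q.length = (v.1 + v.2 - (u.1 + u.2) + 1).toNat := by have := hq.length_eq; omega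
  exact hlen ▸ hq.pathWeight_le ω

theorem stepsZeroOrOne_fst (hp : IsPathFrom p u v) :
    StepsZeroOrOne (p.length - 1) fun t => (p.getD t 0).1 := by
  intro t ht
  dsimp only
  rcases hp.upStep_getD (by omega : t + 1 < p.length) with h | h <;> rw [h] <;> simp

theorem getD_eq_getD_iff (hp : IsPathFrom p u v) (hq : IsPathFrom q u' v')
    (hu : u.1 + u.2 = u'.1 + u'.2) {t : ℕ} (htp : t < p.length) (htq : t < q.length) :
    p.getD t 0 = q.getD t 0 ↔ (p.getD t 0).1 = (q.getD t 0).1 := by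
  refine ⟨congrArg Prod.fst, fun h => Prod.ext h ?_⟩
  have := hp.level_getD t htp
  have := hq.level_getD t htq
  omega

theorem stripSet_eq_image (hp : IsPathFrom p u v) (hu : u.1 + u.2 = 0) (c d : ℝ) :
    stripSet p c d = (p.getD · 0) '' {t : ℕ | t < p.length ∧ c ≤ t ∧ (t : ℝ) ≤ d} := by
  have hlevel : ∀ t < p.length, ((p.getD t 0).1 : ℝ) + (p.getD t 0).2 = t := fun t ht => by
    exact_mod_cast (hp.level_getD t ht).trans (by rw [hu, zero_add])
  ext w
  constructor
  · rintro ⟨hw, hc, hd⟩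
    obtain ⟨t, ht, rfl⟩ := List.mem_iff_getElem.1 hw
    rw [← List.getD_eq_getElem _ 0 ht, hlevel t ht] at hc hd
    exact ⟨t, ⟨ht, hc, hd⟩, List.getD_eq_getElem _ _ ht⟩
  · rintro ⟨t, ⟨ht, hc, hd⟩, rfl⟩
    refine ⟨?_, ?_, ?_⟩
    · show p.getD t 0 ∈ p
      exact List.getD_eq_getElem p 0 ht ▸ List.getElem_mem ht
    · rwa [hlevel t ht]
    · rwa [hlevel t ht]

theorem disjoint_stripSet (hp : IsPathFrom p u v) (hq : IsPathFrom q u' v') (hu : u.1 + u.2 = 0)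
    (hu' : u'.1 + u'.2 = 0) {c d : ℝ}
    (h : ∀ t : ℕ, c ≤ t → (t : ℝ) ≤ d → t < p.length → t < q.length →
      (p.getD t 0).1 ≠ (q.getD t 0).1) :
    Disjoint (stripSet p c d) (stripSet q c d) := by
  rw [hp.stripSet_eq_image hu, hq.stripSet_eq_image hu', Set.disjoint_left]
  rintro _ ⟨t, ⟨htp, hc, hd⟩, rfl⟩ ⟨s, ⟨hsq, -, -⟩, hst⟩
  change q.getD s 0 = p.getD t 0 at hst
  have hs := hq.level_getD s hsq
  have ht := hp.level_getD t htp
  obtain rfl : s = t := by rw [hst] at hs; omega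
  exact h s hc hd htp hsq (congrArg Prod.fst hst).symm

end IsPathFrom

theorem isPathFrom_append_append {l₁ m m' l₂ : List (ℤ × ℤ)} {u v a b : ℤ × ℤ}
    (h : IsPathFrom (l₁ ++ m ++ l₂) u v) (hm : IsPathFrom m a b) (hm' : IsPathFrom m' a b) :
    IsPathFrom (l₁ ++ m' ++ l₂) u v := by
  have hhead : m'.head? = m.head? := hm'.2.1.trans hm.2.1.symm
  have hlast : m'.getLast? = m.getLast? := hm'.2.2.trans hm.2.2.symm
  obtain ⟨hc, hh, hl⟩ := h
  change List.IsChain UpStep _ at hc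
  refine ⟨?_, ?_, ?_⟩
  · change List.IsChain UpStep _
    simp only [List.isChain_append, List.getLast?_append, hhead, hlast] at hc ⊢
    exact ⟨⟨hc.1.1, hm'.1, hc.1.2.2⟩, hc.2⟩
  · simpa only [List.head?_append, hhead] using hh
  · simpa only [List.getLast?_append, hlast] using hl

theorem pathWeight_append_append (ω : ℤ × ℤ → ℝ) {l₁ m l₂ : List (ℤ × ℤ)} {u v a b : ℤ × ℤ}
    (h : IsPathFrom (l₁ ++ m ++ l₂) u v) (hm : IsPathFrom m a b) :
    pathWeight ω (l₁ ++ m ++ l₂) + ω v =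
      (l₁.map ω).sum + (pathWeight ω m + ω b) + (l₂.map ω).sum := by
  rw [h.pathWeight_add, hm.pathWeight_add]
  simp only [List.map_append, List.sum_append]

theorem IsGeodesic.of_infix {ω : ℤ × ℤ → ℝ} {p m : List (ℤ × ℤ)} {u v a b : ℤ × ℤ}
    (hp : IsGeodesic ω u v p) (hm : IsPathFrom m a b) (hmp : m <:+: p) : IsGeodesic ω a b m := by
  obtain ⟨l₁, l₂, rfl⟩ := hmp
  refine ⟨hm, le_antisymm (hm.pathWeight_le_lpTime ω) (csSup_le ⟨_, m, hm, rfl⟩ ?_)⟩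
  rintro _ ⟨m', hm', rfl⟩
  have hpath' := isPathFrom_append_append hp.1 hm hm'
  have h := hpath'.pathWeight_le_lpTime ω
  have e := pathWeight_append_append ω hpath' hm'
  have e' := pathWeight_append_append ω hp.1 hm
  rw [← hp.2] at h
  linarith

theorem _root_.List.getD_take_drop {α : Type*} (l : List α) (d : α) {s n r : ℕ} (hsr : s ≤ r)
    (hr : r < s + n) : ((l.drop s).take n).getD (r - s) d = l.getD r d := by
  simp only [List.getD_eq_getElem?_getD, List.getElem?_take, List.getElem?_drop,
    if_pos (show r - s < n by omega), Nat.add_sub_cancel' hsr]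

theorem _root_.List.take_drop_isInfix {α : Type*} (l : List α) (s n : ℕ) :
    (l.drop s).take n <:+: l :=
  (List.take_prefix _ _).isInfix.trans (List.drop_suffix _ _).isInfix

theorem IsPathFrom.drop_take {p : List (ℤ × ℤ)} {u v : ℤ × ℤ} (hp : IsPathFrom p u v) {s t : ℕ}
    (hst : s ≤ t) (ht : t < p.length) :
    IsPathFrom ((p.drop s).take (t - s + 1)) (p.getD s 0) (p.getD t 0) := by
  have hlen : ((p.drop s).take (t - s + 1)).length = t - s + 1 := by
    rw [List.length_take, List.length_drop]
    omega
  refine ⟨hp.1.infix (p.take_drop_isInfix _ _), ?_, ?_⟩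
  · rw [List.head?_eq_getElem?, List.getElem?_eq_getElem (by omega), ← List.getD_eq_getElem _ 0,
      ← Nat.sub_self s, List.getD_take_drop p 0 (n := t - s + 1) le_rfl (by omega)]
  · rw [List.getLast?_eq_getElem?, hlen, List.getElem?_eq_getElem (by omega),
      ← List.getD_eq_getElem _ 0, Nat.add_sub_cancel,
      List.getD_take_drop p 0 (n := t - s + 1) hst (by omega)]

theorem IsGeodesic.getD_eq_of_getD_eq {ω : ℤ × ℤ → ℝ}
    (huniq : ∀ a b : ℤ × ℤ, a.1 ≤ b.1 → a.2 ≤ b.2 → ∃! m, IsGeodesic ω a b m)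
    {p q : List (ℤ × ℤ)} {u v u' v' : ℤ × ℤ} (hp : IsGeodesic ω u v p) (hq : IsGeodesic ω u' v' q)
    {s t : ℕ} (hst : s ≤ t) (htp : t < p.length) (htq : t < q.length)
    (hs : p.getD s 0 = q.getD s 0) (ht : p.getD t 0 = q.getD t 0)
    {r : ℕ} (hsr : s ≤ r) (hrt : r ≤ t) : p.getD r 0 = q.getD r 0 := by
  have hmp := hp.of_infix (hp.1.drop_take hst htp) (p.take_drop_isInfix _ _)
  have hmq := hq.of_infix (hq.1.drop_take hst htq) (q.take_drop_isInfix _ _)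
  rw [← hs, ← ht] at hmq
  have hle := hp.1.getD_mono hst htp
  obtain ⟨g, -, hg⟩ := huniq _ _ hle.1 hle.2
  have hr : r < s + (t - s + 1) := by omega
  rw [← List.getD_take_drop p 0 hsr hr, ← List.getD_take_drop q 0 hsr hr,
    (hg _ hmp).trans (hg _ hmq).symm]

/-- By uniqueness, geodesics that meet at or below level `a` and again at or above level `b`
coincide in between. -/
theorem IsGeodesic.separated_or_separated {ω : ℤ × ℤ → ℝ}
    (huniq : ∀ a b : ℤ × ℤ, a.1 ≤ b.1 → a.2 ≤ b.2 → ∃! m, IsGeodesic ω a b m)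
    {p q : List (ℤ × ℤ)} {u v u' v' : ℤ × ℤ} (hp : IsGeodesic ω u v p) (hq : IsGeodesic ω u' v' q)
    (hu : u.1 + u.2 = 0) (hu' : u'.1 + u'.2 = 0) (hlen : p.length = q.length)
    {a b : ℕ} {c d : ℝ} (hac : (a : ℝ) ≤ c) (hdb : d ≤ b) (hpq : stripSet p c d ≠ stripSet q c d) :
    (∀ t ∈ Set.Icc 0 a, (p.getD t 0).1 ≠ (q.getD t 0).1) ∨
      ∀ t ∈ Set.Icc b (p.length - 1), (p.getD t 0).1 ≠ (q.getD t 0).1 := by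
  by_contra! h
  obtain ⟨⟨s, ⟨-, hsa⟩, hs⟩, ⟨t, ⟨hbt, htp⟩, ht⟩⟩ := h
  have hpos := List.length_pos_iff.2 hp.1.ne_nil
  apply hpq
  rw [hp.1.stripSet_eq_image hu, hq.1.stripSet_eq_image hu', hlen]
  refine Set.image_congr fun r ⟨hrq, hcr, hrd⟩ => ?_
  have hsr : s ≤ r := by
    have : (s : ℝ) ≤ r := (Nat.cast_le.2 hsa).trans (hac.trans hcr)
    exact_mod_cast this
  have hrt : r ≤ t := by
    have : (r : ℝ) ≤ t := hrd.trans (hdb.trans (Nat.cast_le.2 hbt))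
    exact_mod_cast this
  have hlev : u.1 + u.2 = u'.1 + u'.2 := hu.trans hu'.symm
  exact hp.getD_eq_of_getD_eq huniq hq (hsr.trans hrt) (by omega) (by omega)
    ((hp.1.getD_eq_getD_iff hq.1 hlev (by omega) (by omega)).2 hs)
    ((hp.1.getD_eq_getD_iff hq.1 hlev (by omega) (by omega)).2 ht) hsr hrt

theorem rpow_one_div_eight_le_of_le_pow_four {k m : ℕ} (h : k ≤ m ^ 4) :
    (k : ℝ) ^ ((1 : ℝ) / 8) ≤ m := by
  rcases Nat.eq_zero_or_pos m with rfl | hm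
  · obtain rfl : k = 0 := by simpa using h
    simp
  have h8 : (k : ℝ) ≤ (m : ℝ) ^ 8 := by
    exact_mod_cast h.trans (Nat.pow_le_pow_right hm (by norm_num))
  calc (k : ℝ) ^ ((1 : ℝ) / 8) ≤ ((m : ℝ) ^ 8) ^ ((1 : ℝ) / 8) :=
        Real.rpow_le_rpow (Nat.cast_nonneg k) h8 (by norm_num)
    _ = m := by
        rw [one_div, show (8 : ℝ) = (8 : ℕ) by norm_num]
        exact Real.pow_rpow_inv_natCast (Nat.cast_nonneg m) (by norm_num)

/-- **Lemma 2.8 (Erdős–Szekeres ordering lemma).** Suppose geodesics are unique, `u₁ < ⋯ < u_k`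
lie on `𝕃_0`, `v₁, …, v_k` are distinct points on `𝕃_n`, and the geodesics `Γ_{u_i,v_i}`
pairwise do not coincide between `𝕃_{n/3}` and `𝕃_{2n/3}`. Then at least `k^{1/8}` of them
are pairwise disjoint in one of the four strips `𝕃_0`–`𝕃_{n/6}`, `𝕃_{n/6}`–`𝕃_{n/3}`,
`𝕃_{n/3}`–`𝕃_{2n/3}`, `𝕃_{2n/3}`–`𝕃_n`. -/
theorem ordering_lemma (om : ℤ × ℤ → ℝ)
    (huniq : ∀ u v : ℤ × ℤ, u.1 ≤ v.1 → u.2 ≤ v.2 → ∃! p, IsGeodesic om u v p)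
    (n k : ℕ) (u v : Fin k → ℤ × ℤ) (p : Fin k → List (ℤ × ℤ))
    (hu : ∀ i, (u i).1 + (u i).2 = 0)
    (huord : ∀ i j, i < j → adLt (u i) (u j))
    (hv : ∀ i, (v i).1 + (v i).2 = 2 * (n : ℤ))
    (hvinj : Function.Injective v)
    (hgeo : ∀ i, IsGeodesic om (u i) (v i) (p i))
    (hdiff : ∀ i j, i ≠ j →
      stripSet (p i) (2 * (n : ℝ) / 3) (4 * (n : ℝ) / 3) ≠
        stripSet (p j) (2 * (n : ℝ) / 3) (4 * (n : ℝ) / 3)) :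
    ∃ I : Finset (Fin k), (k : ℝ) ^ ((1 : ℝ) / 8) ≤ (I.card : ℝ) ∧
      ∃ a b : ℝ,
        ((a, b) = (0, (n : ℝ) / 3) ∨ (a, b) = ((n : ℝ) / 3, 2 * (n : ℝ) / 3) ∨
          (a, b) = (2 * (n : ℝ) / 3, 4 * (n : ℝ) / 3) ∨ (a, b) = (4 * (n : ℝ) / 3, 2 * (n : ℝ))) ∧
        ∀ i ∈ I, ∀ j ∈ I, i ≠ j → Disjoint (stripSet (p i) a b) (stripSet (p j) a b) := by
  have hpath i : IsPathFrom (p i) (u i) (v i) := (hgeo i).1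
  have hlen i : (p i).length = 2 * n + 1 := by
    have := (hpath i).length_eq
    rw [hu i, hv i] at this
    omega
  have hend i : (p i).getD (2 * n) 0 = v i := by
    simpa [hlen] using (hpath i).getD_length_sub_one
  obtain ⟨I, hI, hsep⟩ := exists_separated_subfamily (X := fun i t => ((p i).getD t 0).1)
    (N := 2 * n) (a := ⌊2 * (n : ℝ) / 3⌋₊) (b := ⌈4 * (n : ℝ) / 3⌉₊)
    (Nat.floor_le_of_le (by push_cast; linarith [n.cast_nonneg (α := ℝ)]))
    (fun i => by simpa [hlen] using (hpath i).stepsZeroOrOne_fst)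
    (fun i j hij => by
      obtain ⟨m, hm, he⟩ := huord i j hij
      simp only [(hpath _).getD_zero, he]
      omega)
    (fun i j hij => by
      have hx : (v i).1 = (v j).1 := by simpa only [hend] using hij
      exact hvinj (Prod.ext hx (by linarith [hv i, hv j])))
    (fun i j hij => by
      simpa [hlen] using (hgeo i).separated_or_separated huniq (hgeo j) (hu i) (hu j)
        (by rw [hlen, hlen]) (Nat.floor_le (by positivity)) (Nat.le_ceil _) (hdiff i j hij))
  refine ⟨I, rpow_one_div_eight_le_of_le_pow_four (by simpa using hI), ?_⟩
  rcases hsep with hlo | hhi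
  · refine ⟨0, n / 3, Or.inl rfl, fun i hi j hj hij =>
      (hpath i).disjoint_stripSet (hpath j) (hu i) (hu j) fun t _ ht _ _ =>
        hlo i hi j hj hij t ⟨t.zero_le, Nat.le_floor (by linarith)⟩⟩
  · refine ⟨4 * n / 3, 2 * n, Or.inr (Or.inr (Or.inr rfl)), fun i hi j hj hij =>
      (hpath i).disjoint_stripSet (hpath j) (hu i) (hu j) fun t ht _ htp _ =>
        hhi i hi j hj hij t ⟨Nat.ceil_le.2 ht, by rw [hlen] at htp; omega⟩⟩

end LPP
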